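/- Let (Ω, 𝔽, P) be a probability space and let {M(x) : x ∈ ℝ} be a family of real random variables such that M(x) ∈ L²(P) for every x ∈ ℝ. Suppose there exist measurable K : Ω → [0, ∞) with E[K²] < ∞ and measurable δ : Ω → (0, ∞) such that for P-almost every ω, the map x ↦ M(x, ω) is continuously differentiable with derivative M′(x, ω) satisfying |M′(x, ω) − M′(y, ω)| ≤ K(ω)·|x − y|^{δ(ω)} for all x, y ∈ ℝ. Then for every x ∈ ℝ, the almost-sure derivative M′(x) belongs to L²(P) and the difference quotients converge in L²: lim_{h → 0} E[((M(x + h) − M(x))/h − M′(x))²] = 0. -/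

import Mathlib

/-!
By the mean value theorem, the difference quotient `(M(x+h) - M(x))/h` equals `M'(c)` for some
`c` between `x` and `x + h`, so for `0 < |h| ≤ 1` the Hölder condition bounds its distance to
`M'(x)` by `K`. Hence `M'(x)` differs from `M(x+1) - M(x)` by an `L²` variable, and dominated
convergence with the integrable bound `K²` gives the `L²` convergence.
-/

open MeasureTheory Filter Topology

lemma abs_slope_sub_le_of_abs_deriv_sub_le {f g : ℝ → ℝ} (hf : ∀ y, HasDerivAt f (g y) y)
    {x r C : ℝ} (hC : ∀ y ∈ Metric.closedBall x r, |g y - g x| ≤ C) {h : ℝ} (hh : h ≠ 0)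
    (hhr : |h| ≤ r) :
    |(f (x + h) - f x) / h - g x| ≤ C := by
  have hmvt := (convex_closedBall x r).norm_image_sub_le_of_norm_hasDerivWithin_le
    (f := fun y => f y - g x * y)
    (fun y _ => ((hf y).sub ((hasDerivAt_id y).const_mul (g x))).hasDerivWithinAt)
    (by simpa using hC) (Metric.mem_closedBall_self ((abs_nonneg h).trans hhr))
    (y := x + h) (by simpa [Metric.mem_closedBall, dist_eq_norm] using hhr)
  have hslope : (f (x + h) - f x) / h - g x
      = ((f (x + h) - g x * (x + h)) - (f x - g x * x)) / h := by
    field_simp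
    ring
  rw [hslope, abs_div, div_le_iff₀ (abs_pos.2 hh)]
  simpa using hmvt

lemma abs_sub_le_of_holder {g : ℝ → ℝ} {k d : ℝ} (hd : 0 < d)
    (hg : ∀ a b, |g a - g b| ≤ k * |a - b| ^ d) {x y : ℝ} (hxy : |y - x| ≤ 1) :
    |g y - g x| ≤ k := by
  have hk : 0 ≤ k := by simpa using (abs_nonneg _).trans (hg (x + 1) x)
  calc |g y - g x| ≤ k * |y - x| ^ d := hg y x
    _ ≤ k * 1 := by gcongr; exact Real.rpow_le_one (abs_nonneg _) hxy hd.le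
    _ = k := mul_one k

section SquareIntegrable

variable {Ω : Type*} [MeasurableSpace Ω] {P : Measure Ω}

lemma integrable_sq_sub_of_abs_sub_le {F G K : Ω → ℝ} (hF : AEStronglyMeasurable F P)
    (hG : AEStronglyMeasurable G P) (hK : Integrable (fun ω => K ω ^ 2) P)
    (hFG : ∀ᵐ ω ∂P, |F ω - G ω| ≤ K ω) :
    Integrable (fun ω => (F ω - G ω) ^ 2) P :=
  hK.mono' ((hF.sub hG).pow 2) <| by
    filter_upwards [hFG] with ω hω
    simpa using pow_le_pow_left₀ (abs_nonneg _) hω 2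

lemma memLp_two_of_abs_sub_le {F G K : Ω → ℝ} (hF : MemLp F 2 P)
    (hG : AEStronglyMeasurable G P) (hK : Integrable (fun ω => K ω ^ 2) P)
    (hFG : ∀ᵐ ω ∂P, |F ω - G ω| ≤ K ω) :
    MemLp G 2 P := by
  have hdiff : MemLp (F - G) 2 P :=
    (memLp_two_iff_integrable_sq (hF.1.sub hG)).2
      (integrable_sq_sub_of_abs_sub_le hF.1 hG hK hFG)
  simpa using hF.sub hdiff

lemma tendsto_integral_sq_sub_of_abs_sub_le {ι : Type*} {l : Filter ι} [l.IsCountablyGenerated]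
    {F : ι → Ω → ℝ} {G K : Ω → ℝ} (hF : ∀ i, AEStronglyMeasurable (F i) P)
    (hG : AEStronglyMeasurable G P) (hK : Integrable (fun ω => K ω ^ 2) P)
    (hbound : ∀ᶠ i in l, ∀ᵐ ω ∂P, |F i ω - G ω| ≤ K ω)
    (hlim : ∀ᵐ ω ∂P, Tendsto (fun i => F i ω) l (𝓝 (G ω))) :
    Tendsto (fun i => ∫ ω, (F i ω - G ω) ^ 2 ∂P) l (𝓝 0) := by
  have h := tendsto_integral_filter_of_dominated_convergence (l := l)
    (F := fun i ω => (F i ω - G ω) ^ 2) (fun ω => K ω ^ 2)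
    (Eventually.of_forall fun i => ((hF i).sub hG).pow 2) ?_ hK
    (f := fun _ => (0 : ℝ)) ?_
  · simpa using h
  · filter_upwards [hbound] with i hi
    filter_upwards [hi] with ω hω
    simpa using pow_le_pow_left₀ (abs_nonneg _) hω 2
  · filter_upwards [hlim] with ω hω
    simpa using (hω.sub_const (G ω)).pow 2

end SquareIntegrable

theorem family_differentiable_in_L2_general
    {Ω : Type*} [MeasurableSpace Ω] (P : Measure Ω)
    (M M' : ℝ → Ω → ℝ) (hM : ∀ x : ℝ, MemLp (M x) 2 P)
    (K δ : Ω → ℝ)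
    (hK2 : Integrable (fun ω => K ω ^ 2) P)
    (hδpos : ∀ ω, 0 < δ ω)
    (hreg : ∀ᵐ ω ∂P,
      (∀ x : ℝ, HasDerivAt (fun y => M y ω) (M' x ω) x) ∧
      Continuous (fun x => M' x ω) ∧
      ∀ x y : ℝ, |M' x ω - M' y ω| ≤ K ω * |x - y| ^ δ ω) :
    ∀ x : ℝ, MemLp (M' x) 2 P ∧
      Tendsto (fun h : ℝ => ∫ ω, ((M (x + h) ω - M x ω) / h - M' x ω) ^ 2 ∂P)
        (nhdsWithin (0 : ℝ) {h : ℝ | h ≠ 0}) (nhds 0) := by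
  intro x
  have hquot_meas (h : ℝ) : AEStronglyMeasurable (fun ω => (M (x + h) ω - M x ω) / h) P :=
    ((hM _).1.sub (hM x).1).mul_const h⁻¹
  have hlim : ∀ᵐ ω ∂P, Tendsto (fun h => (M (x + h) ω - M x ω) / h) (𝓝[≠] 0) (𝓝 (M' x ω)) := by
    filter_upwards [hreg] with ω hω
    simpa only [smul_eq_mul, inv_mul_eq_div] using (hω.1 x).tendsto_slope_zero
  have hbound : ∀ᵐ ω ∂P, ∀ h ≠ 0, |h| ≤ 1 →
      |(M (x + h) ω - M x ω) / h - M' x ω| ≤ K ω := by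
    filter_upwards [hreg] with ω hω h hh hh1
    obtain ⟨hderiv, -, hholder⟩ := hω
    exact abs_slope_sub_le_of_abs_deriv_sub_le hderiv
      (fun y hy => abs_sub_le_of_holder (hδpos ω) hholder (Metric.mem_closedBall.1 hy)) hh hh1
  have hM'_meas : AEStronglyMeasurable (M' x) P :=
    aestronglyMeasurable_of_tendsto_ae _ hquot_meas hlim
  refine ⟨memLp_two_of_abs_sub_le ((hM (x + 1)).sub (hM x)) hM'_meas hK2 ?_, ?_⟩
  · filter_upwards [hbound] with ω hω
    simpa using hω 1 one_ne_zero (by norm_num)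
  · refine tendsto_integral_sq_sub_of_abs_sub_le hquot_meas hM'_meas hK2 ?_ hlim
    filter_upwards [eventually_mem_nhdsWithin.and (nhdsWithin_le_nhds
      ((continuous_abs.tendsto' 0 0 abs_zero).eventually (eventually_le_nhds one_pos)))]
      with h ⟨hh, hh1⟩
    filter_upwards [hbound] with ω hω using hω h hh hh1

/-- L²-differentiability of a family of random variables that is a.s. of class `C^{1,δ}(K)`
with `K ∈ L²(P)` and `δ > 0` (Theorem 4.3 of the paper): the a.s. derivative `M'(x)` is in
`L²(P)` and the difference quotients converge to it in `L²`. -/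
theorem family_differentiable_in_L2
    {Ω : Type*} [MeasurableSpace Ω] (P : Measure Ω) [IsProbabilityMeasure P]
    (M M' : ℝ → Ω → ℝ) (hM : ∀ x : ℝ, MemLp (M x) 2 P)
    (K δ : Ω → ℝ) (hKmeas : Measurable K) (hKnonneg : ∀ ω, 0 ≤ K ω)
    (hK2 : Integrable (fun ω => K ω ^ 2) P)
    (hδmeas : Measurable δ) (hδpos : ∀ ω, 0 < δ ω)
    (hreg : ∀ᵐ ω ∂P,
      (∀ x : ℝ, HasDerivAt (fun y => M y ω) (M' x ω) x) ∧
      Continuous (fun x => M' x ω) ∧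
      ∀ x y : ℝ, |M' x ω - M' y ω| ≤ K ω * |x - y| ^ δ ω) :
    ∀ x : ℝ, MemLp (M' x) 2 P ∧
      Tendsto (fun h : ℝ => ∫ ω, ((M (x + h) ω - M x ω) / h - M' x ω) ^ 2 ∂P)
        (nhdsWithin (0 : ℝ) {h : ℝ | h ≠ 0}) (nhds 0) :=
  family_differentiable_in_L2_general P M M' hM K δ hK2 hδpos hreg
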